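/- arXiv:2305.06623 — 2 statements merged into one kernel-verified Lean document; each statement's English description precedes it below -/
import Mathlib

section
/- Let Φ be the linear functional on ℚ(q)[z] determined by Φ([n,z choose n]_q) = 1/(-q^2;q)_n for all n ≥ 0 (using the basis {[n,z choose n]_q}). Then for all 0 ≤ m ≤ n, Φ([m,z choose n]_q) = (-1)^{n-m} q^{n-m} / (-q^2;q)_n. -/
/-!
Expanding the top factor `[m+1]_q + q^(m+1) z = [n+1]_q + q^(n+1) ([m-n]_q + q^(m-n) z)` gives the
q-Pascal rule `[m+1, z choose n+1] = q^(n+1) [m, z choose n+1] + [m, z choose n]`. Applying `Φ`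
and solving for `Φ [m, z choose n+1]` determines `Φ [m, z choose n]` by induction on `n - m`,
starting from the prescribed values on the diagonal `m = n`.
-/

open Finset Polynomial

noncomputable def q : RatFunc ℚ := RatFunc.X

/-- q-integer `[k]_q = (1-q^k)/(1-q)` for `k : ℤ`. -/
noncomputable def qint (k : ℤ) : RatFunc ℚ := (1 - q ^ k) / (1 - q)

/-- q-factorial `[n]_q!`. -/
noncomputable def qfact (n : ℕ) : RatFunc ℚ := ∏ m ∈ Finset.range n, qint (m + 1)

/-- q-Pochhammer `(A;Q)_n`. -/
noncomputable def qPoch (Q A : RatFunc ℚ) (n : ℕ) : RatFunc ℚ :=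
  ∏ j ∈ Finset.range n, (1 - A * Q ^ j)

/-- The generalized q-binomial polynomial `[m, z choose n]_q`. -/
noncomputable def qbinomPoly (m n : ℕ) : Polynomial (RatFunc ℚ) :=
  Polynomial.C (qfact n)⁻¹ *
    ∏ k ∈ Finset.Icc ((m : ℤ) - n + 1) (m : ℤ),
      (Polynomial.C (qint k) + Polynomial.C (q ^ k) * Polynomial.X)

lemma q_ne_zero : q ≠ 0 := RatFunc.X_ne_zero

lemma q_pow_sub_ne_zero {n : ℕ} (hn : 0 < n) (a : ℚ) : q ^ n - RatFunc.C a ≠ 0 := by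
  have h := RatFunc.algebraMap_ne_zero (X_pow_sub_C_ne_zero hn a)
  rwa [map_sub, map_pow, RatFunc.algebraMap_X, RatFunc.algebraMap_C] at h

lemma one_sub_q_pow_ne_zero {n : ℕ} (hn : 0 < n) : 1 - q ^ n ≠ 0 := by
  have h := q_pow_sub_ne_zero hn 1
  rw [map_one] at h
  exact sub_ne_zero.2 (sub_ne_zero.1 h).symm

lemma one_add_q_pow_ne_zero {n : ℕ} (hn : 0 < n) : 1 + q ^ n ≠ 0 := by
  have h := q_pow_sub_ne_zero hn (-1)
  rwa [map_neg, map_one, sub_neg_eq_add, add_comm] at h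

lemma qint_add (a b : ℤ) : qint (a + b) = qint a + q ^ a * qint b := by
  simp only [qint, zpow_add₀ q_ne_zero]
  ring

lemma qint_natCast_ne_zero {n : ℕ} (hn : 0 < n) : qint n ≠ 0 := by
  rw [qint, zpow_natCast]
  exact div_ne_zero (one_sub_q_pow_ne_zero hn) (by simpa using one_sub_q_pow_ne_zero one_pos)

lemma qfact_succ (n : ℕ) : qfact (n + 1) = qfact n * qint (n + 1) :=
  prod_range_succ _ _

lemma qPoch_q_neg_q_sq_succ (n : ℕ) :
    qPoch q (-q ^ 2) (n + 1) = qPoch q (-q ^ 2) n * (1 + q ^ (n + 2)) := by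
  rw [qPoch, prod_range_succ, qPoch]
  ring

lemma qPoch_q_neg_q_sq_ne_zero (n : ℕ) : qPoch q (-q ^ 2) n ≠ 0 :=
  prod_ne_zero_iff.2 fun j _ => by
    convert one_add_q_pow_ne_zero (n := j + 2) (by omega) using 1
    ring

lemma prod_Icc_sub_eq_prod_range {M : Type*} [CommMonoid M] (f : ℤ → M) (m : ℤ) (n : ℕ) :
    ∏ k ∈ Icc (m - n + 1) m, f k = ∏ i ∈ range n, f (m - i) := by
  refine prod_nbij' (fun k => (m - k).toNat) (fun i => m - i) (fun k hk => ?_) (fun i hi => ?_)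
    (fun k hk => ?_) (fun i hi => ?_) (fun k hk => congrArg f ?_) <;>
    simp only [mem_Icc, mem_range] at * <;> omega

noncomputable def qbinomFactor (k : ℤ) : (RatFunc ℚ)[X] := C (qint k) + C (q ^ k) * X

lemma qbinomFactor_add (a b : ℤ) :
    qbinomFactor (a + b) = C (qint a) + C (q ^ a) * qbinomFactor b := by
  simp only [qbinomFactor, qint_add, zpow_add₀ q_ne_zero, map_add, map_mul]
  ring

lemma qbinomPoly_eq_prod_range (m n : ℕ) :
    qbinomPoly m n = C (qfact n)⁻¹ * ∏ i ∈ range n, qbinomFactor (m - i) := by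
  unfold qbinomPoly qbinomFactor
  rw [prod_Icc_sub_eq_prod_range]

lemma qbinomPoly_succ_succ (m n : ℕ) :
    qbinomPoly (m + 1) (n + 1) = q ^ (n + 1) • qbinomPoly m (n + 1) + qbinomPoly m n := by
  have top : qbinomFactor ((m + 1 : ℕ) : ℤ) =
      C (qint (n + 1)) + C (q ^ (n + 1)) * qbinomFactor (m - n) := by
    have h := qbinomFactor_add ((n : ℤ) + 1) (m - n)
    rw [zpow_add_one₀ q_ne_zero, zpow_natCast, ← pow_succ] at h
    rw [← h]
    push_cast
    ring_nf
  have shift : ∀ i ∈ range n, qbinomFactor ((m + 1 : ℕ) - (i + 1 : ℕ)) = qbinomFactor (m - i) :=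
    fun i _ => by push_cast; ring_nf
  have cancel : C (qint (n + 1))⁻¹ * C (qint (n + 1)) = 1 := by
    rw [← map_mul, inv_mul_cancel₀ (by exact_mod_cast qint_natCast_ne_zero n.succ_pos), map_one]
  rw [qbinomPoly_eq_prod_range, qbinomPoly_eq_prod_range, qbinomPoly_eq_prod_range,
    prod_range_succ', prod_range_succ, prod_congr rfl shift, Nat.cast_zero, sub_zero, top,
    qfact_succ, smul_eq_C_mul, mul_inv, map_mul]
  linear_combination (C (qfact n)⁻¹ * ∏ i ∈ range n, qbinomFactor (m - i)) * cancel

theorem Phi_qbinomPoly (Φ : Polynomial (RatFunc ℚ) →ₗ[RatFunc ℚ] RatFunc ℚ)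
    (hΦ : ∀ n : ℕ, Φ (qbinomPoly n n) = (qPoch q (-q ^ 2) n)⁻¹) :
    ∀ m n : ℕ, m ≤ n →
      Φ (qbinomPoly m n) = (-1) ^ (n - m) * q ^ (n - m) / qPoch q (-q ^ 2) n := by
  intro m n hmn
  obtain ⟨d, rfl⟩ := Nat.exists_eq_add_of_le hmn
  rw [Nat.add_sub_cancel_left]
  clear hmn
  induction d generalizing m with
  | zero => simpa using hΦ m
  | succ d ih =>
    have hpascal := congrArg Φ (qbinomPoly_succ_succ m (m + d))
    have ih' := ih (m + 1)
    rw [show m + 1 + d = m + d + 1 by omega] at ih'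
    rw [map_add, map_smul, smul_eq_mul, ih', ih, qPoch_q_neg_q_sq_succ] at hpascal
    rw [← add_assoc, qPoch_q_neg_q_sq_succ]
    have hP := qPoch_q_neg_q_sq_ne_zero (m + d)
    have hN := one_add_q_pow_ne_zero (n := m + d + 2) (by omega)
    have hq : q ^ (m + d + 1) ≠ 0 := pow_ne_zero _ q_ne_zero
    apply mul_left_cancel₀ hq
    linear_combination (norm := skip) -hpascal
    field_simp
    ring
end

section
/- Let Φ be the linear functional on ℚ(q)[z] with Φ([n,z choose n]_q) = 1/(-q^2;q)_n for all n ≥ 0. Then for every polynomial P(z) ∈ ℚ(q)[z], q·Φ(P(1+qz)) + Φ(P(z)) = (1+q)·P(0). -/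
set_option maxHeartbeats 1000000
set_option synthInstance.maxHeartbeats 400000


open Finset Polynomial

lemma q_eq : q = algebraMap (Polynomial ℚ) (RatFunc ℚ) Polynomial.X := by
  simp [q, RatFunc.algebraMap_X]

lemma one_sub_q_pow_ne (m : ℕ) (hm : 1 ≤ m) : (1 : RatFunc ℚ) - q ^ m ≠ 0 := by
  rw [q_eq, ← map_pow, ← map_one (algebraMap (Polynomial ℚ) (RatFunc ℚ)), ← map_sub]
  apply RatFunc.algebraMap_ne_zero
  intro h
  have := congrArg (fun p => Polynomial.coeff p 0) h
  simp [Polynomial.coeff_X_pow] at this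
  rw [if_neg (by omega)] at this
  simp at this

lemma one_add_q_pow_ne (m : ℕ) (hm : 1 ≤ m) : (1 : RatFunc ℚ) + q ^ m ≠ 0 := by
  rw [q_eq, ← map_pow, ← map_one (algebraMap (Polynomial ℚ) (RatFunc ℚ)), ← map_add]
  apply RatFunc.algebraMap_ne_zero
  intro h
  have := congrArg (fun p => Polynomial.coeff p 0) h
  simp [Polynomial.coeff_X_pow] at this
  rw [if_neg (by omega)] at this
  simp at this

lemma one_sub_q_ne : (1 : RatFunc ℚ) - q ≠ 0 := by
  simpa using one_sub_q_pow_ne 1 le_rfl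

lemma q_zpow_eq (k : ℤ) (hk : 0 ≤ k) : q ^ k = q ^ k.toNat := by
  rw [← zpow_natCast, Int.toNat_of_nonneg hk]

lemma q_zpow_ne (k : ℤ) : q ^ k ≠ 0 := zpow_ne_zero k q_ne_zero

lemma qint_ne (k : ℤ) (hk : 1 ≤ k) : qint k ≠ 0 := by
  unfold qint
  rw [q_zpow_eq k (by omega)]
  exact div_ne_zero (one_sub_q_pow_ne _ (by omega)) one_sub_q_ne

lemma qint_succ (k : ℤ) : qint k + q ^ k = qint (k + 1) := by
  unfold qint
  rw [zpow_add_one₀ q_ne_zero, eq_div_iff one_sub_q_ne, add_mul,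
    div_mul_cancel₀ _ one_sub_q_ne]
  ring

lemma qfact_ne (n : ℕ) : qfact n ≠ 0 := by
  apply Finset.prod_ne_zero_iff.mpr
  intro m _
  exact qint_ne _ (by omega)

noncomputable def g (k : ℤ) : Polynomial (RatFunc ℚ) :=
  Polynomial.C (qint k) + Polynomial.C (q ^ k) * Polynomial.X

noncomputable def rr : Polynomial (RatFunc ℚ) := 1 + Polynomial.C q * Polynomial.X

lemma qbinom_eq (n : ℕ) :
    qbinomPoly n n = Polynomial.C (qfact n)⁻¹ * ∏ k ∈ Finset.Icc (1:ℤ) (n:ℤ), g k := by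
  unfold qbinomPoly g
  rw [show ((n:ℤ) - n + 1) = 1 by ring]

lemma g_natDegree (k : ℤ) : (g k).natDegree = 1 := by
  rw [g, add_comm]
  exact Polynomial.natDegree_linear (q_zpow_ne k)

lemma g_ne (k : ℤ) : g k ≠ 0 := by
  intro h
  have := g_natDegree k
  rw [h] at this
  simp at this

lemma prod_g_natDegree (n : ℕ) : (∏ k ∈ Finset.Icc (1:ℤ) (n:ℤ), g k).natDegree = n := by
  rw [Polynomial.natDegree_prod _ _ (fun k _ => g_ne k)]
  simp [g_natDegree, Int.card_Icc]

lemma B_ne (n : ℕ) : qbinomPoly n n ≠ 0 := by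
  rw [qbinom_eq]
  exact mul_ne_zero (Polynomial.C_ne_zero.mpr (inv_ne_zero (qfact_ne n)))
    (Finset.prod_ne_zero_iff.mpr fun k _ => g_ne k)

lemma B_natDegree (n : ℕ) : (qbinomPoly n n).natDegree = n := by
  rw [qbinom_eq, Polynomial.natDegree_mul (Polynomial.C_ne_zero.mpr (inv_ne_zero (qfact_ne n)))
    (Finset.prod_ne_zero_iff.mpr fun k _ => g_ne k), Polynomial.natDegree_C, prod_g_natDegree]
  ring

lemma g_one : g 1 = rr := by
  rw [g, rr, qint, zpow_one, div_self one_sub_q_ne]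
  simp

lemma g_comp (k : ℤ) : (g k).comp rr = g (k + 1) := by
  rw [g, g, rr]
  simp only [Polynomial.add_comp, Polynomial.mul_comp, Polynomial.C_comp, Polynomial.X_comp]
  rw [← qint_succ k, zpow_add_one₀ q_ne_zero, Polynomial.C_add, Polynomial.C_mul]
  ring

lemma F_comp (n : ℕ) :
    (∏ k ∈ Finset.Icc (1:ℤ) (n:ℤ), g k).comp rr = ∏ k ∈ Finset.Icc (2:ℤ) ((n:ℤ)+1), g k := by
  rw [Polynomial.prod_comp]
  simp_rw [g_comp]
  rw [show Finset.Icc (2:ℤ) ((n:ℤ)+1) = (Finset.Icc (1:ℤ) (n:ℤ)).map (addRightEmbedding 1) by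
    rw [Finset.map_add_right_Icc]; norm_num]
  rw [Finset.prod_map]
  rfl

lemma g_split (k : ℤ) : g (k + 1) = Polynomial.C (q ^ k) * g 1 + Polynomial.C (qint k) := by
  rw [g, g_one, rr, ← qint_succ k, zpow_add_one₀ q_ne_zero, Polynomial.C_add,
    Polynomial.C_mul]
  ring

lemma B_comp (n : ℕ) : (qbinomPoly n n).comp rr
    = Polynomial.C (qfact n)⁻¹ * ∏ k ∈ Finset.Icc (2:ℤ) ((n:ℤ)+1), g k := by
  rw [qbinom_eq, Polynomial.mul_comp, Polynomial.C_comp, F_comp]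

lemma qbinom_zero : qbinomPoly 0 0 = 1 := by
  rw [qbinom_eq]
  simp [qfact]

lemma prod_qint (n : ℕ) : ∏ k ∈ Finset.Icc (1:ℤ) (n:ℤ), qint k = qfact n := by
  induction n with
  | zero => simp [qfact]
  | succ n ih =>
    rw [show Finset.Icc (1:ℤ) ((n+1:ℕ):ℤ) = insert ((n:ℤ)+1) (Finset.Icc (1:ℤ) (n:ℤ)) by
        ext x; push_cast; simp; omega,
      Finset.prod_insert (by simp), ih, qfact_succ, mul_comm]

lemma B_eval (n : ℕ) : (qbinomPoly n n).eval 0 = 1 := by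
  rw [qbinom_eq, Polynomial.eval_mul, Polynomial.eval_C, Polynomial.eval_prod]
  simp only [g, Polynomial.eval_add, Polynomial.eval_mul, Polynomial.eval_C, Polynomial.eval_X,
    mul_zero, add_zero]
  rw [prod_qint, inv_mul_cancel₀ (qfact_ne n)]

lemma comp_sum : ∀ n : ℕ, (qbinomPoly n n).comp rr
    = ∑ j ∈ Finset.range (n+1), Polynomial.C (q ^ j) * qbinomPoly j j := by
  intro n
  induction n with
  | zero => simp [qbinom_zero]
  | succ n ih =>
    have hc : (qbinomPoly (n+1) (n+1)).comp rr
        = Polynomial.C (qfact (n+1))⁻¹ * ∏ k ∈ Finset.Icc (2:ℤ) ((n:ℤ)+2), g k := by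
      rw [B_comp]; push_cast; ring_nf
    rw [hc,
      show Finset.Icc (2:ℤ) ((n:ℤ)+2) = insert ((n:ℤ)+2) (Finset.Icc (2:ℤ) ((n:ℤ)+1)) by
        ext x; simp; omega,
      Finset.prod_insert (by simp)]
    have hstep : Polynomial.C (qfact (n+1))⁻¹ *
        (g ((n:ℤ)+2) * ∏ k ∈ Finset.Icc (2:ℤ) ((n:ℤ)+1), g k)
        = Polynomial.C (q ^ ((n:ℤ)+1)) * qbinomPoly (n+1) (n+1) + (qbinomPoly n n).comp rr := by
      rw [show ((n:ℤ)+2) = ((n:ℤ)+1)+1 by ring, g_split ((n:ℤ)+1)]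
      rw [qbinom_eq (n+1), B_comp n]
      rw [show Finset.Icc (1:ℤ) ((n+1:ℕ):ℤ) = insert (1:ℤ) (Finset.Icc (2:ℤ) ((n:ℤ)+1)) by
        ext x; push_cast; simp; omega,
        Finset.prod_insert (by simp)]
      have hq : (qfact n)⁻¹ = (qfact (n+1))⁻¹ * qint ((n:ℤ)+1) := by
        rw [qfact_succ, mul_inv, mul_assoc,
          inv_mul_cancel₀ (qint_ne ((n:ℤ)+1) (by omega)), mul_one]
      rw [hq, Polynomial.C_mul]
      ring
    rw [hstep, ih,
      Finset.sum_range_succ (fun j => Polynomial.C (q ^ j) * qbinomPoly j j) (n+1),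
      show ((n:ℤ)+1) = ((n+1:ℕ):ℤ) by push_cast; ring, zpow_natCast]
    ring

lemma qPoch_succ (n : ℕ) :
    qPoch q (-q^2) (n+1) = qPoch q (-q^2) n * (1 + q ^ (n+2)) := by
  rw [qPoch, Finset.prod_range_succ, ← qPoch]
  congr 1
  ring

lemma qPoch_ne (n : ℕ) : qPoch q (-q^2) n ≠ 0 := by
  apply Finset.prod_ne_zero_iff.mpr
  intro j _
  rw [show (1 : RatFunc ℚ) - (-q^2) * q ^ j = 1 + q ^ (j+2) by ring]
  exact one_add_q_pow_ne _ (by omega)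

lemma key_sum (n : ℕ) :
    q * (∑ j ∈ Finset.range (n+1), q ^ j * (qPoch q (-q^2) j)⁻¹) + (qPoch q (-q^2) n)⁻¹
      = 1 + q := by
  induction n with
  | zero => simp [qPoch]; ring
  | succ n ih =>
    rw [Finset.sum_range_succ, qPoch_succ]
    have hP := qPoch_ne n
    have hA := one_add_q_pow_ne (n+2) (by omega)
    have key : q * (q ^ (n+1) * (qPoch q (-q^2) n * (1 + q ^ (n+2)))⁻¹)
        + (qPoch q (-q^2) n * (1 + q ^ (n+2)))⁻¹ = (qPoch q (-q^2) n)⁻¹ := by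
      rw [mul_inv]
      field_simp
      ring
    calc q * ((∑ j ∈ Finset.range (n+1), q ^ j * (qPoch q (-q^2) j)⁻¹)
            + q ^ (n+1) * (qPoch q (-q^2) n * (1 + q ^ (n+2)))⁻¹)
          + (qPoch q (-q^2) n * (1 + q ^ (n+2)))⁻¹
        = q * (∑ j ∈ Finset.range (n+1), q ^ j * (qPoch q (-q^2) j)⁻¹)
          + (q * (q ^ (n+1) * (qPoch q (-q^2) n * (1 + q ^ (n+2)))⁻¹)
            + (qPoch q (-q^2) n * (1 + q ^ (n+2)))⁻¹) := by ring
      _ = 1 + q := by rw [key]; exact ih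

theorem Phi_functional_equation (Φ : Polynomial (RatFunc ℚ) →ₗ[RatFunc ℚ] RatFunc ℚ)
    (hΦ : ∀ n : ℕ, Φ (qbinomPoly n n) = (qPoch q (-q ^ 2) n)⁻¹) :
    ∀ P : Polynomial (RatFunc ℚ),
      q * Φ (P.comp (1 + Polynomial.C q * Polynomial.X)) + Φ P = (1 + q) * P.eval 0 := by
  have hrr : (1 + Polynomial.C q * Polynomial.X) = rr := rfl
  suffices h : ∀ (n : ℕ) (P : Polynomial (RatFunc ℚ)), P.natDegree ≤ n →
      q * Φ (P.comp rr) + Φ P = (1 + q) * P.eval 0 by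
    intro P; rw [hrr]; exact h P.natDegree P le_rfl
  have hCmul : ∀ (a : RatFunc ℚ) (p : Polynomial (RatFunc ℚ)),
      Φ (Polynomial.C a * p) = a * Φ p := by
    intro a p
    rw [← Polynomial.smul_eq_C_mul, map_smul, smul_eq_mul]
  have hB : ∀ n, q * Φ ((qbinomPoly n n).comp rr) + Φ (qbinomPoly n n)
      = (1 + q) * (qbinomPoly n n).eval 0 := by
    intro n
    rw [comp_sum n, map_sum, B_eval, mul_one, hΦ]
    have hc : ∀ j ∈ Finset.range (n+1),
        Φ (Polynomial.C (q^j) * qbinomPoly j j) = q^j * (qPoch q (-q^2) j)⁻¹ := by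
      intro j _
      rw [hCmul, hΦ]
    rw [Finset.sum_congr rfl hc]
    have := key_sum n
    rw [show (-q^2 : RatFunc ℚ) = -q^2 by ring] at this
    exact this
  have hsmul : ∀ (a : RatFunc ℚ) (P : Polynomial (RatFunc ℚ)),
      (q * Φ (P.comp rr) + Φ P = (1+q) * P.eval 0) →
      q * Φ ((Polynomial.C a * P).comp rr) + Φ (Polynomial.C a * P)
        = (1+q) * (Polynomial.C a * P).eval 0 := by
    intro a P h
    rw [Polynomial.mul_comp, Polynomial.C_comp, hCmul, hCmul, Polynomial.eval_mul,
      Polynomial.eval_C]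
    linear_combination a * h
  intro n
  induction n with
  | zero =>
    intro P hP
    have hPC : P = Polynomial.C (P.coeff 0) := Polynomial.eq_C_of_natDegree_le_zero hP
    rw [hPC]
    have := hsmul (P.coeff 0) _ (hB 0)
    rwa [qbinom_zero, mul_one] at this
  | succ n ihn =>
    intro P hP
    by_cases h0 : P.natDegree ≤ n
    · exact ihn P h0
    · have hdeg : P.natDegree = n+1 := by omega
      have hPne : P ≠ 0 := by intro h; rw [h] at hdeg; simp at hdeg
      set B := qbinomPoly (n+1) (n+1) with hBdef
      have hBne : B ≠ 0 := B_ne (n+1)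
      have hlB : B.leadingCoeff ≠ 0 := Polynomial.leadingCoeff_ne_zero.mpr hBne
      set a := P.leadingCoeff * B.leadingCoeff⁻¹ with ha
      have hane : a ≠ 0 :=
        mul_ne_zero (Polynomial.leadingCoeff_ne_zero.mpr hPne) (inv_ne_zero hlB)
      have hdegB : (Polynomial.C a * B).degree = P.degree := by
        rw [Polynomial.degree_mul, Polynomial.degree_C hane,
          Polynomial.degree_eq_natDegree hPne, Polynomial.degree_eq_natDegree hBne,
          hdeg, B_natDegree]
        simp
      have hlc : (Polynomial.C a * B).leadingCoeff = P.leadingCoeff := by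
        rw [Polynomial.leadingCoeff_mul, Polynomial.leadingCoeff_C, ha, mul_assoc,
          inv_mul_cancel₀ hlB, mul_one]
      have hsub : (P - Polynomial.C a * B).natDegree ≤ n := by
        rcases eq_or_ne (P - Polynomial.C a * B) 0 with h|h
        · rw [h]; simp
        · have hlt := Polynomial.degree_sub_lt hdegB.symm hPne hlc.symm
          have hdP : P.degree = ((n+1 : ℕ) : WithBot ℕ) := by
            rw [Polynomial.degree_eq_natDegree hPne, hdeg]
          rw [hdP] at hlt
          have := (Polynomial.natDegree_lt_iff_degree_lt h).mpr hlt
          omega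
      have h1 := ihn _ hsub
      have h2 := hsmul a B (hB (n+1))
      have e1 : P.comp rr = (P - Polynomial.C a * B).comp rr + (Polynomial.C a * B).comp rr := by
        rw [← Polynomial.add_comp, sub_add_cancel]
      have e2 : P.eval 0 = (P - Polynomial.C a * B).eval 0 + (Polynomial.C a * B).eval 0 := by
        rw [← Polynomial.eval_add, sub_add_cancel]
      have e3 : Φ P = Φ (P - Polynomial.C a * B) + Φ (Polynomial.C a * B) := by
        rw [← map_add, sub_add_cancel]
      rw [e1, map_add, e2, e3]
      linear_combination h1 + h2
end
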